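/- Let k ≥ 2, T_1, …, T_k > 0, and 1 ≤ i ≤ n. The differential operator ζ^i = (1/(T_1 + ⋯ + T_k)) Σ_{α=1}^{k−1} T_α ∂/∂w_i^α (with Wirtinger derivatives) acts on G^{(k)} by ζ^i(G^{(k)}) = −((Σ_{α=1}^{k−1} \bar{w}_i^α)/(4 T_k)) · G^{(k)}, where \bar{w} denotes complex conjugation. -/

import Mathlib

open MeasureTheory

/-- The Gaussian `G_T(x,z) = (4πT)^{−(2n+m)/2} exp(−(|x|²+|z|²)/(4T))` on `ℝ^m × ℂ^n`. -/
noncomputable def gaussT (m n : ℕ) (T : ℝ) (p : (Fin m → ℝ) × (Fin n → ℂ)) : ℝ :=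
  (4 * Real.pi * T) ^ (-((2 * (n : ℝ) + (m : ℝ)) / 2)) *
    Real.exp (-(((∑ j, (p.1 j) ^ 2) + ∑ i, Complex.normSq (p.2 i)) / (4 * T)))

/-- The product Gaussian
`G^{(k)}(q¹,…,q^{k−1}) = (∏_{α=1}^{k−1} G_{T_α}(q^α)) · G_{T_k}(Σ_α q^α)`
on `(ℝ^m × ℂ^n)^{k−1}`. -/
noncomputable def gaussProd (m n k : ℕ) (hk : 0 < k) (T : Fin k → ℝ)
    (q : Fin (k - 1) → (Fin m → ℝ) × (Fin n → ℂ)) : ℝ :=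
  (∏ α, gaussT m n (T (Fin.castLE (Nat.sub_le k 1) α)) (q α)) *
    gaussT m n (T ⟨k - 1, Nat.sub_lt hk one_pos⟩) (∑ α, q α)

/-- The Wirtinger derivative `∂F/∂w_i^α = (1/2)(∂F/∂u_i^α − i ∂F/∂v_i^α)` of a
real-valued function `F` on `(ℝ^m × ℂ^n)^{k−1}` in the complex coordinate
`w_i^α = u_i^α + i v_i^α`, expressed via directional (Fréchet) derivatives. -/
noncomputable def wirtingerDeriv (m n k : ℕ)
    (F : (Fin (k - 1) → (Fin m → ℝ) × (Fin n → ℂ)) → ℝ)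
    (q : Fin (k - 1) → (Fin m → ℝ) × (Fin n → ℂ))
    (α : Fin (k - 1)) (i : Fin n) : ℂ :=
  (1 / 2 : ℂ) *
    (((fderiv ℝ F q (Pi.single α ((0 : Fin m → ℝ), Pi.single i (1 : ℂ))) : ℝ) : ℂ)
      - Complex.I *
        ((fderiv ℝ F q (Pi.single α ((0 : Fin m → ℝ), Pi.single i Complex.I)) : ℝ) : ℂ))

/-!
Along a line `p + t • v`, the Gaussian `G_T` has logarithmic derivative `-⟨p, v⟩ / (2T)` for the
Euclidean inner product of `ℝ^m × ℂ^n = ℝ^{m+2n}`. Hence the real gradient of `G^{(k)}` in the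
coordinate `w_i^α` is `A = -G^{(k)} (w_i^α / (2T_α) + W / (2T_k))` with `W = Σ_β w_i^β`, and the
Wirtinger derivative is `conj A / 2`. Weighting by `T_α` and summing, the terms `conj w_i^α / 4`
add up to `conj W / 4`, which combines with `conj W · Σ_{α<k} T_α / (4T_k)` into
`conj W · (T_1 + ⋯ + T_k) / (4T_k)`.
-/

open scoped ComplexConjugate InnerProductSpace

theorem HasDerivAt.finsetProd_of_eq_mul_self {𝕜 ι : Type*} [NontriviallyNormedField 𝕜]
    {s : Finset ι} {f : ι → 𝕜 → 𝕜} {a : ι → 𝕜} {x : 𝕜}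
    (h : ∀ β ∈ s, HasDerivAt (f β) (a β * f β x) x) :
    HasDerivAt (fun t ↦ ∏ β ∈ s, f β t) ((∑ β ∈ s, a β) * ∏ β ∈ s, f β x) x := by
  classical
  induction s using Finset.induction_on with
  | empty => simpa using hasDerivAt_const x (1 : 𝕜)
  | insert b s hb ih =>
    simp only [Finset.prod_insert hb, Finset.sum_insert hb]
    refine ((h b (s.mem_insert_self b)).mul
      (ih fun β hβ ↦ h β (Finset.mem_insert_of_mem hβ))).congr_deriv ?_
    ring

theorem hasDerivAt_norm_sq_add_smul {F : Type*} [NormedAddCommGroup F] [InnerProductSpace ℝ F]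
    (x v : F) : HasDerivAt (fun t : ℝ ↦ ‖x + t • v‖ ^ 2) (2 * ⟪x, v⟫_ℝ) 0 := by
  simpa using (((hasDerivAt_id (0 : ℝ)).smul_const v).const_add x).norm_sq

@[fun_prop]
theorem Complex.differentiable_normSq : Differentiable ℝ Complex.normSq := by
  show Differentiable ℝ fun z : ℂ ↦ Complex.normSq z
  simp_rw [Complex.normSq_eq_norm_sq]
  exact (contDiff_norm_sq ℝ (n := 1)).differentiable one_ne_zero

theorem Fin.sum_univ_eq_sum_castLE_add_last {M : Type*} [AddCommMonoid M] {k : ℕ} (hk : 0 < k)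
    (f : Fin k → M) :
    ∑ γ, f γ = ∑ α : Fin (k - 1), f (Fin.castLE (Nat.sub_le k 1) α)
      + f ⟨k - 1, Nat.sub_lt hk Nat.one_pos⟩ := by
  cases k with
  | zero => exact absurd hk (lt_irrefl 0)
  | succ k => exact Fin.sum_univ_castSucc f

section

variable {m n k : ℕ}

noncomputable def euclidInner (p v : (Fin m → ℝ) × (Fin n → ℂ)) : ℝ :=
  ∑ j, ⟪p.1 j, v.1 j⟫_ℝ + ∑ i, ⟪p.2 i, v.2 i⟫_ℝ

noncomputable def euclidSqNorm (p : (Fin m → ℝ) × (Fin n → ℂ)) : ℝ :=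
  ∑ j, p.1 j ^ 2 + ∑ i, Complex.normSq (p.2 i)

@[simp]
theorem euclidInner_zero_right (p : (Fin m → ℝ) × (Fin n → ℂ)) : euclidInner p 0 = 0 := by
  simp [euclidInner]

theorem euclidInner_single_snd (p : (Fin m → ℝ) × (Fin n → ℂ)) (i : Fin n) (c : ℂ) :
    euclidInner p (0, Pi.single i c) = ⟪p.2 i, c⟫_ℝ := by
  simp [euclidInner, Pi.single_apply, apply_ite, -Complex.inner]

theorem hasLineDerivAt_euclidSqNorm (p v : (Fin m → ℝ) × (Fin n → ℂ)) :
    HasLineDerivAt ℝ euclidSqNorm (2 * euclidInner p v) p v := by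
  have hre (j : Fin m) : HasDerivAt (fun t : ℝ ↦ (p.1 j + t * v.1 j) ^ 2)
      (2 * ⟪p.1 j, v.1 j⟫_ℝ) 0 := by
    simpa [Real.norm_eq_abs, sq_abs] using hasDerivAt_norm_sq_add_smul (p.1 j) (v.1 j)
  have hcx (i : Fin n) : HasDerivAt (fun t : ℝ ↦ Complex.normSq (p.2 i + t • v.2 i))
      (2 * ⟪p.2 i, v.2 i⟫_ℝ) 0 := by
    simpa [Complex.normSq_eq_norm_sq] using hasDerivAt_norm_sq_add_smul (p.2 i) (v.2 i)
  simpa [HasLineDerivAt, euclidSqNorm, euclidInner, mul_add, Finset.mul_sum] using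
    (HasDerivAt.fun_sum fun j _ ↦ hre j).fun_add (HasDerivAt.fun_sum fun i _ ↦ hcx i)

theorem hasLineDerivAt_gaussT (T : ℝ) (p v : (Fin m → ℝ) × (Fin n → ℂ)) :
    HasLineDerivAt ℝ (gaussT m n T) (-(euclidInner p v / (2 * T)) * gaussT m n T p) p v := by
  have h : HasDerivAt (fun t : ℝ ↦ euclidSqNorm (p + t • v)) (2 * euclidInner p v) 0 :=
    hasLineDerivAt_euclidSqNorm p v
  have hexp := ((h.div_const (4 * T)).fun_neg.exp).const_mul
    ((4 * Real.pi * T) ^ (-((2 * (n : ℝ) + (m : ℝ)) / 2)))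
  rw [zero_smul, add_zero] at hexp
  exact hexp.congr_deriv (by unfold gaussT euclidSqNorm; ring)

@[fun_prop]
theorem differentiable_gaussT (T : ℝ) : Differentiable ℝ (gaussT m n T) := by
  unfold gaussT
  fun_prop

theorem differentiable_gaussProd (hk : 0 < k) (T : Fin k → ℝ) :
    Differentiable ℝ (gaussProd m n k hk T) := by
  unfold gaussProd
  fun_prop

theorem hasLineDerivAt_gaussProd (hk : 0 < k) (T : Fin k → ℝ)
    (q e : Fin (k - 1) → (Fin m → ℝ) × (Fin n → ℂ)) :
    HasLineDerivAt ℝ (gaussProd m n k hk T)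
      (-(∑ β, euclidInner (q β) (e β) / (2 * T (Fin.castLE (Nat.sub_le k 1) β))
          + euclidInner (∑ β, q β) (∑ β, e β) / (2 * T ⟨k - 1, Nat.sub_lt hk one_pos⟩))
        * gaussProd m n k hk T q) q e := by
  have hfactors := HasDerivAt.finsetProd_of_eq_mul_self (s := Finset.univ) (x := (0 : ℝ))
    (f := fun β t ↦ gaussT m n (T (Fin.castLE (Nat.sub_le k 1) β)) (q β + t • e β))
    (a := fun β ↦ -(euclidInner (q β) (e β) / (2 * T (Fin.castLE (Nat.sub_le k 1) β))))
    fun β _ ↦ by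
      rw [zero_smul, add_zero]
      exact hasLineDerivAt_gaussT _ (q β) (e β)
  have hlast := hasLineDerivAt_gaussT (m := m) (n := n) (T ⟨k - 1, Nat.sub_lt hk one_pos⟩)
    (∑ β, q β) (∑ β, e β)
  have hsum (t : ℝ) : ∑ β, (q + t • e) β = ∑ β, q β + t • ∑ β, e β := by
    simp [Finset.sum_add_distrib, Finset.smul_sum]
  unfold HasLineDerivAt gaussProd
  simp only [hsum]
  exact (hfactors.mul hlast).congr_deriv
    (by simp only [zero_smul, add_zero, Finset.sum_neg_distrib]; ring)

theorem wirtingerDeriv_eq_conj_div_two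
    (F : (Fin (k - 1) → (Fin m → ℝ) × (Fin n → ℂ)) → ℝ)
    (q : Fin (k - 1) → (Fin m → ℝ) × (Fin n → ℂ)) (α : Fin (k - 1)) (i : Fin n) (A : ℂ)
    (hA : ∀ c : ℂ, fderiv ℝ F q (Pi.single α ((0 : Fin m → ℝ), Pi.single i c)) = ⟪A, c⟫_ℝ) :
    wirtingerDeriv m n k F q α i = conj A / 2 := by
  rw [wirtingerDeriv, hA, hA]
  apply Complex.ext <;> simp [Complex.inner] <;> ring

theorem wirtingerDeriv_gaussProd (hk : 0 < k) (T : Fin k → ℝ)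
    (q : Fin (k - 1) → (Fin m → ℝ) × (Fin n → ℂ)) (α : Fin (k - 1)) (i : Fin n) :
    wirtingerDeriv m n k (gaussProd m n k hk T) q α i =
      -(gaussProd m n k hk T q : ℂ) *
        (conj ((q α).2 i) / (4 * T (Fin.castLE (Nat.sub_le k 1) α))
          + conj (∑ β, (q β).2 i) / (4 * T ⟨k - 1, Nat.sub_lt hk one_pos⟩)) := by
  set G := gaussProd m n k hk T q
  set Tα := T (Fin.castLE (Nat.sub_le k 1) α)
  set Tk := T ⟨k - 1, Nat.sub_lt hk one_pos⟩
  set A : ℂ := (-(G / (2 * Tα))) • (q α).2 i + (-(G / (2 * Tk))) • ∑ β, (q β).2 i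
  have hgrad (c : ℂ) :
      fderiv ℝ (gaussProd m n k hk T) q (Pi.single α ((0 : Fin m → ℝ), Pi.single i c))
        = ⟪A, c⟫_ℝ := by
    rw [← (differentiable_gaussProd hk T q).lineDeriv_eq_fderiv,
      (hasLineDerivAt_gaussProd hk T q _).lineDeriv,
      Fintype.sum_eq_single α fun β hβ ↦ by simp [Pi.single_eq_of_ne hβ],
      Finset.sum_pi_single', Pi.single_eq_same, if_pos (Finset.mem_univ α),
      euclidInner_single_snd, euclidInner_single_snd, inner_add_left, real_inner_smul_left,
      real_inner_smul_left, Prod.snd_sum, Finset.sum_apply]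
    ring
  rw [wirtingerDeriv_eq_conj_div_two _ q α i A hgrad]
  simp only [A, map_add, Complex.real_smul, map_mul, Complex.conj_ofReal]
  push_cast
  ring

end

/-- For `k ≥ 2`, `T₁, …, T_k > 0`, and `1 ≤ i ≤ n`, the operator
`ζ^i = (1/(T₁+⋯+T_k)) Σ_{α=1}^{k−1} T_α ∂/∂w_i^α` (with Wirtinger derivatives)
acts on `G^{(k)}` by `ζ^i(G^{(k)}) = −((Σ_α w̄_i^α)/(4T_k)) · G^{(k)}`. -/
theorem zeta_acts_on_gaussProd (m n k : ℕ) (hk : 2 ≤ k) (T : Fin k → ℝ)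
    (hT : ∀ i, 0 < T i) (i : Fin n)
    (q : Fin (k - 1) → (Fin m → ℝ) × (Fin n → ℂ)) :
    (((∑ γ, T γ : ℝ) : ℂ))⁻¹ *
        ∑ α : Fin (k - 1), (T (Fin.castLE (Nat.sub_le k 1) α) : ℂ) *
          wirtingerDeriv m n k (gaussProd m n k (by omega) T) q α i
      = -((∑ β, (starRingEnd ℂ) ((q β).2 i)) / (4 * (T ⟨k - 1, by omega⟩ : ℂ)))
          * ((gaussProd m n k (by omega) T q : ℝ) : ℂ) := by
  have hk₀ : 0 < k := by omega
  have hT₀ (γ : Fin k) : (T γ : ℂ) ≠ 0 := Complex.ofReal_ne_zero.mpr (hT γ).ne'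
  have hsum₀ : ((∑ γ, T γ : ℝ) : ℂ) ≠ 0 :=
    Complex.ofReal_ne_zero.mpr (Finset.sum_pos (fun γ _ ↦ hT γ) ⟨⟨0, hk₀⟩, Finset.mem_univ _⟩).ne'
  set G : ℂ := (gaussProd m n k hk₀ T q : ℂ)
  set W : ℂ := conj (∑ β, (q β).2 i)
  have hterm (α : Fin (k - 1)) : (T (Fin.castLE (Nat.sub_le k 1) α) : ℂ) *
      wirtingerDeriv m n k (gaussProd m n k hk₀ T) q α i
      = -G / 4 * conj ((q α).2 i)
        - G * W / (4 * T ⟨k - 1, by omega⟩) * T (Fin.castLE (Nat.sub_le k 1) α) := by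
    rw [wirtingerDeriv_gaussProd]
    field_simp [hT₀]
    ring
  rw [Finset.sum_congr rfl fun α _ ↦ hterm α, Finset.sum_sub_distrib, ← Finset.mul_sum,
    ← Finset.mul_sum, ← map_sum, inv_mul_eq_iff_eq_mul₀ hsum₀,
    Fin.sum_univ_eq_sum_castLE_add_last hk₀, Complex.ofReal_add, Complex.ofReal_sum]
  field_simp [hT₀]
  ring
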